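/- arXiv:1808.02583 — 3 statements merged into one kernel-verified Lean document; each statement's English description precedes it below -/
import Mathlib

section
/- Let k, l be reals with k > 0, l ≥ 0, -2k + 4l + 2 > 0, and 1 - k - 16l/13 ≥ 0, let A > (4k+4l+2)/k be real, and set c = l/(-2k+4l+2). Fix constants C₁, C₂ and let ε > 0. Then there is a constant C₃ such that the following holds for all T ≥ 2: if ξ₁, …, ξ_R are real numbers with 1 ≤ ξ_r ≤ T^{13/84} for all r, and such that for every V ≥ 1 the number of indices r with ξ_r ≥ V is at most min(C₁ · T^{1+ε} · V^{-6}, C₂ · T^{1+l/k+ε} · V^{-(4k+4l+2)/k}), then ∑_{r=1}^{R} ξ_r^A ≤ C₃ · T^{1 + 13(A-6)/84 + (A+2)ε}. -/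
open Finset Real

/-! Split the `ξ_r` dyadically according to `j = ⌊log₂ ξ_r⌋`. The `j`-th block has at most
`C₁ T^(1+ε) 2^(-6j)` elements, each with `ξ_r^A ≤ 2^((j+1)A)`, so it contributes
`O(T^(1+ε) 2^((A-6)j))`. As `A > 6`, this geometric series is dominated by its last term, where
`2^j ≤ T^(13/84)`. -/

lemma two_pow_natFloor_logb_le {x : ℝ} (hx : 1 ≤ x) : (2 : ℝ) ^ ⌊logb 2 x⌋₊ ≤ x :=
  calc (2 : ℝ) ^ ⌊logb 2 x⌋₊ = 2 ^ (⌊logb 2 x⌋₊ : ℝ) := (rpow_natCast _ _).symm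
    _ ≤ 2 ^ logb 2 x :=
      rpow_le_rpow_of_exponent_le one_le_two (Nat.floor_le (logb_nonneg one_lt_two hx))
    _ = x := rpow_logb two_pos (by norm_num) (by linarith)

lemma lt_two_pow_natFloor_logb_succ {x : ℝ} (hx : 0 < x) : x < 2 ^ (⌊logb 2 x⌋₊ + 1) :=
  calc x = 2 ^ logb 2 x := (rpow_logb two_pos (by norm_num) hx).symm
    _ < 2 ^ ((⌊logb 2 x⌋₊ + 1 : ℕ) : ℝ) := by
      apply rpow_lt_rpow_of_exponent_lt one_lt_two
      push_cast
      exact Nat.lt_floor_add_one _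
    _ = 2 ^ (⌊logb 2 x⌋₊ + 1) := rpow_natCast _ _

lemma geom_sum_range_succ_le_of_one_lt {q : ℝ} (hq : 1 < q) (n : ℕ) :
    ∑ j ∈ range (n + 1), q ^ j ≤ q / (q - 1) * q ^ n := by
  have hq1 : 0 < q - 1 := by linarith
  rw [geom_sum_eq hq.ne', div_mul_eq_mul_div, ← pow_succ', div_le_div_iff_of_pos_right hq1]
  linarith

section Dyadic

variable {ι : Type*} [Fintype ι] (ξ : ι → ℝ) {B a A : ℝ}

lemma sum_rpow_natFloor_logb_eq_le (hξ : ∀ r, 1 ≤ ξ r) (hA : 0 ≤ A)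
    (hcount : ∀ V : ℝ, V ≥ 1 → (#{r | V ≤ ξ r} : ℝ) ≤ B * V ^ (-a)) (j : ℕ) :
    ∑ r with ⌊logb 2 (ξ r)⌋₊ = j, ξ r ^ A ≤ 2 ^ A * B * ((2 : ℝ) ^ (A - a)) ^ j := by
  have hterm : ∀ r ∈ ({r | ⌊logb 2 (ξ r)⌋₊ = j} : Finset ι),
      ξ r ^ A ≤ ((2 : ℝ) ^ (j + 1)) ^ A := by
    intro r hr
    rw [mem_filter] at hr
    have := lt_two_pow_natFloor_logb_succ (x := ξ r) (by linarith [hξ r])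
    rw [hr.2] at this
    exact rpow_le_rpow (by linarith [hξ r]) this.le hA
  have hcard : (#{r | ⌊logb 2 (ξ r)⌋₊ = j} : ℝ) ≤ B * ((2 : ℝ) ^ j) ^ (-a) := by
    refine le_trans ?_ (hcount _ (one_le_pow₀ one_le_two))
    have hsub :
        ({r | ⌊logb 2 (ξ r)⌋₊ = j} : Finset ι) ⊆ ({r | (2 : ℝ) ^ j ≤ ξ r} : Finset ι) :=
      monotone_filter_right _ fun r _ hr => hr ▸ two_pow_natFloor_logb_le (hξ r)
    exact_mod_cast card_le_card hsub
  calc ∑ r with ⌊logb 2 (ξ r)⌋₊ = j, ξ r ^ A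
      ≤ #{r | ⌊logb 2 (ξ r)⌋₊ = j} * ((2 : ℝ) ^ (j + 1)) ^ A := by
        simpa using sum_le_sum hterm
    _ ≤ B * ((2 : ℝ) ^ j) ^ (-a) * ((2 : ℝ) ^ (j + 1)) ^ A := by gcongr
    _ = 2 ^ A * B * ((2 : ℝ) ^ (A - a)) ^ j := by
      rw [← rpow_pow_comm zero_le_two, ← rpow_pow_comm zero_le_two, rpow_sub two_pos,
        rpow_neg zero_le_two]
      field_simp
      ring

theorem sum_rpow_le_of_card_le_rpow {X : ℝ} (hξ : ∀ r, 1 ≤ ξ r ∧ ξ r ≤ X) (hX : 1 ≤ X)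
    (hB : 0 ≤ B) (ha : 0 ≤ a) (haA : a < A)
    (hcount : ∀ V : ℝ, V ≥ 1 → (#{r | V ≤ ξ r} : ℝ) ≤ B * V ^ (-a)) :
    ∑ r, ξ r ^ A ≤ 2 ^ A * (2 ^ (A - a) / (2 ^ (A - a) - 1)) * B * X ^ (A - a) := by
  set q : ℝ := 2 ^ (A - a)
  have hq : 1 < q := one_lt_rpow one_lt_two (by linarith)
  set J := ⌊logb 2 X⌋₊
  have hmaps : ∀ r ∈ (univ : Finset ι), ⌊logb 2 (ξ r)⌋₊ ∈ range (J + 1) := fun r _ =>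
    mem_range_succ_iff.2 <| Nat.floor_le_floor <|
      logb_le_logb_of_le one_lt_two (by linarith [hξ r]) (hξ r).2
  have hqJ : q ^ J ≤ X ^ (A - a) := by
    rw [rpow_pow_comm zero_le_two]
    exact rpow_le_rpow (by positivity) (two_pow_natFloor_logb_le hX) (by linarith)
  calc ∑ r, ξ r ^ A
      = ∑ j ∈ range (J + 1), ∑ r with ⌊logb 2 (ξ r)⌋₊ = j, ξ r ^ A :=
        (sum_fiberwise_of_maps_to hmaps _).symm
    _ ≤ ∑ j ∈ range (J + 1), 2 ^ A * B * q ^ j :=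
        sum_le_sum fun j _ => sum_rpow_natFloor_logb_eq_le ξ (fun r => (hξ r).1) (by linarith)
          hcount j
    _ = 2 ^ A * B * ∑ j ∈ range (J + 1), q ^ j := (mul_sum ..).symm
    _ ≤ 2 ^ A * B * (q / (q - 1) * q ^ J) := by
        gcongr
        exact geom_sum_range_succ_le_of_one_lt hq J
    _ ≤ 2 ^ A * (q / (q - 1)) * B * X ^ (A - a) := by
        have : 0 ≤ q / (q - 1) := div_nonneg (by linarith) (by linarith)
        calc 2 ^ A * B * (q / (q - 1) * q ^ J) = 2 ^ A * (q / (q - 1)) * B * q ^ J := by ring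
          _ ≤ _ := by gcongr

end Dyadic

theorem dyadic_large_values_general (k l : ℝ) (hk : 0 < k)
    (hden : 0 < -2 * k + 4 * l + 2)
    (A : ℝ) (hA : (4 * k + 4 * l + 2) / k < A)
    (C₁ C₂ ε : ℝ) (hε : 0 < ε) :
    ∃ C₃ : ℝ, ∀ T : ℝ, T ≥ 2 → ∀ R : ℕ, ∀ ξ : Fin R → ℝ,
      (∀ r, 1 ≤ ξ r ∧ ξ r ≤ T ^ ((13 : ℝ) / 84)) →
      (∀ V : ℝ, V ≥ 1 →
        (({r : Fin R | V ≤ ξ r} : Finset (Fin R)).card : ℝ) ≤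
          min (C₁ * T ^ (1 + ε) * V ^ (-6 : ℝ))
            (C₂ * T ^ (1 + l / k + ε) * V ^ (-((4 * k + 4 * l + 2) / k)))) →
      ∑ r, ξ r ^ A ≤ C₃ * T ^ (1 + 13 * (A - 6) / 84 + (A + 2) * ε) := by
  have hA6 : 6 < A := lt_trans ((lt_div_iff₀ hk).2 (by linarith)) hA
  set K : ℝ := 2 ^ A * (2 ^ (A - 6) / (2 ^ (A - 6) - 1))
  have hK : 0 ≤ K := mul_nonneg (by positivity) <| div_nonneg (by positivity) <|
    by linarith [one_lt_rpow (one_lt_two (α := ℝ)) (by linarith : 0 < A - 6)]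
  refine ⟨K * max C₁ 0, fun T hT R ξ hξ hcount => ?_⟩
  have hT1 : 1 ≤ T := by linarith
  have hcount₁ : ∀ V : ℝ, V ≥ 1 →
      (#{r | V ≤ ξ r} : ℝ) ≤ max C₁ 0 * T ^ (1 + ε) * V ^ (-6 : ℝ) := fun V hV =>
    (hcount V hV).trans <| (min_le_left _ _).trans <| by gcongr; exact le_max_left _ _
  calc ∑ r, ξ r ^ A
      ≤ K * (max C₁ 0 * T ^ (1 + ε)) * (T ^ ((13 : ℝ) / 84)) ^ (A - 6) :=
        sum_rpow_le_of_card_le_rpow ξ hξ (one_le_rpow hT1 (by norm_num)) (by positivity)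
          (by norm_num) hA6 hcount₁
    _ = K * max C₁ 0 * T ^ (1 + 13 * (A - 6) / 84 + ε) := by
        rw [← rpow_mul (by linarith), mul_assoc K, mul_assoc (max C₁ 0), ← rpow_add (by linarith)]
        ring_nf
    _ ≤ K * max C₁ 0 * T ^ (1 + 13 * (A - 6) / 84 + (A + 2) * ε) := by
        gcongr
        nlinarith

/-- The dyadic decomposition lemma underlying the third case of the
moment estimate: if values `ξ_r ∈ [1, T^(13/84)]` satisfy the two large-values counting
bounds, then `∑ ξ_r^A ≤ C₃ · T^(1 + 13(A-6)/84 + (A+2)ε)`. -/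
theorem dyadic_large_values (k l : ℝ) (hk : 0 < k) (hl : 0 ≤ l)
    (hden : 0 < -2 * k + 4 * l + 2) (hkl : 1 - k - 16 * l / 13 ≥ 0)
    (A : ℝ) (hA : (4 * k + 4 * l + 2) / k < A)
    (c : ℝ) (hc : c = l / (-2 * k + 4 * l + 2))
    (C₁ C₂ ε : ℝ) (hε : 0 < ε) :
    ∃ C₃ : ℝ, ∀ T : ℝ, T ≥ 2 → ∀ R : ℕ, ∀ ξ : Fin R → ℝ,
      (∀ r, 1 ≤ ξ r ∧ ξ r ≤ T ^ ((13 : ℝ) / 84)) →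
      (∀ V : ℝ, V ≥ 1 →
        (({r : Fin R | V ≤ ξ r} : Finset (Fin R)).card : ℝ) ≤
          min (C₁ * T ^ (1 + ε) * V ^ (-6 : ℝ))
            (C₂ * T ^ (1 + l / k + ε) * V ^ (-((4 * k + 4 * l + 2) / k)))) →
      ∑ r, ξ r ^ A ≤ C₃ * T ^ (1 + 13 * (A - 6) / 84 + (A + 2) * ε) :=
  dyadic_large_values_general k l hk hden A hA C₁ C₂ ε hε
end

section
/- Let D ≥ 4 and M be real numbers. Assume: (i) for every ε > 0 there is a constant with |β(1/2+it)| ≤ C t^{13/84+ε} for all t ≥ 1; (ii) for every ε > 0 there is a constant with ∫₁^T |ζ(1/2+it)|^D dt ≤ C T^{M+ε} for all T ≥ 2; (iii) for every ε > 0 there is a constant with ∫₁^T |β(1/2+it)|⁴ dt ≤ C T^{1+ε} for all T ≥ 2. Then for every real A with 4 ≤ A ≤ D and every ε > 0 there is a constant C' such that ∫₁^T |ζ(1/2+it) · β(1/2+it)|^A dt ≤ C' T^{(13/84 + (M - 8/21)/D)·A + 8/21 + ε} for all T ≥ 2. -/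
/-!
Write `F = ‖ζ(1/2+it)‖`, `G = ‖β(1/2+it)‖`, `θ = A/D` and `b = 4(1-θ)`, so that
`‖Z‖^A = F^A G^b · G^(A-b)`. On `(1, T]` the subconvexity bound gives
`G^(A-b) ≪ T^((A-b)(13/84+ε))`, and Hölder's inequality with exponents `1/θ` and `1/(1-θ)` gives
`∫ F^(θD) G^((1-θ)4) ≤ (∫ F^D)^θ (∫ G^4)^(1-θ) ≪ T^(θM + 1 - θ + ε)`. The exponents add up to
`(A-b)·13/84 + θM + 1 - θ`, which is the claimed one. Bounds of the shape `≪_ε T^(a+ε)` are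
stable under products and nonnegative powers, so the `ε`s take care of themselves.
-/

open Complex MeasureTheory

/-- The Dirichlet beta function, i.e. the L-function of the unique nontrivial
Dirichlet character modulo 4. -/
noncomputable def dirichletBeta : ℂ → ℂ :=
  DirichletCharacter.LFunction ((ZMod.χ₄).ringHomComp (Int.castRingHom ℂ))

theorem mul_div_add_one_le {r ε : ℝ} (hr : 0 ≤ r) (hε : 0 ≤ ε) : r * (ε / (r + 1)) ≤ ε := by
  rw [mul_div_assoc']
  exact div_le_of_le_mul₀ (by linarith) hε (by nlinarith)

theorem Real.rpow_mul_rpow_inv {x : ℝ} (hx : 0 ≤ x) {s : ℝ} (hs : s ≠ 0) (c : ℝ) :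
    (x ^ (s * c)) ^ s⁻¹ = x ^ c := by
  rw [← Real.rpow_mul hx, mul_right_comm, mul_inv_cancel₀ hs, one_mul]

theorem integral_rpow_mul_rpow_le {α : Type*} [MeasurableSpace α] {μ : Measure α}
    {f g : α → ℝ} {p q θ : ℝ} (hf : 0 ≤ f) (hg : 0 ≤ g)
    (hfm : AEStronglyMeasurable f μ) (hgm : AEStronglyMeasurable g μ)
    (hfp : Integrable (fun x => f x ^ p) μ) (hgq : Integrable (fun x => g x ^ q) μ)
    (hθ₀ : 0 ≤ θ) (hθ₁ : θ ≤ 1) :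
    ∫ x, f x ^ (θ * p) * g x ^ ((1 - θ) * q) ∂μ ≤
      (∫ x, f x ^ p ∂μ) ^ θ * (∫ x, g x ^ q ∂μ) ^ (1 - θ) := by
  rcases hθ₀.eq_or_lt with rfl | hθ₀
  · simp
  rcases hθ₁.eq_or_lt with rfl | hθ₁
  · simp
  have hθ₁' : 0 < 1 - θ := sub_pos.2 hθ₁
  have memLp_rpow {h : α → ℝ} {s c : ℝ} (hs : 0 < s) (h0 : 0 ≤ h)
      (hm : AEStronglyMeasurable h μ) (hi : Integrable (fun x => h x ^ c) μ) :
      MemLp (fun x => h x ^ (s * c)) (ENNReal.ofReal s⁻¹) μ := by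
    refine (integrable_norm_rpow_iff (hm.aemeasurable.pow_const _).aestronglyMeasurable
      (by simpa using hs) ENNReal.ofReal_ne_top).1 (hi.congr (.of_forall fun x => ?_))
    dsimp only
    rw [ENNReal.toReal_ofReal (inv_nonneg.2 hs.le), Real.norm_of_nonneg (Real.rpow_nonneg (h0 x) _),
      Real.rpow_mul_rpow_inv (h0 x) hs.ne']
  have holder := integral_mul_le_Lp_mul_Lq_of_nonneg
    (Real.HolderConjugate.inv_inv hθ₀ hθ₁' (by ring))
    (.of_forall fun x => Real.rpow_nonneg (hf x) _) (.of_forall fun x => Real.rpow_nonneg (hg x) _)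
    (memLp_rpow hθ₀ hf hfm hfp) (memLp_rpow hθ₁' hg hgm hgq)
  simpa only [one_div, inv_inv, Real.rpow_mul_rpow_inv (hf _) hθ₀.ne',
    Real.rpow_mul_rpow_inv (hg _) hθ₁'.ne'] using holder

theorem setIntegral_mul_le_mul_setIntegral {α : Type*} [MeasurableSpace α] {μ : Measure α}
    {s : Set α} (hs : MeasurableSet s) {f g : α → ℝ} {K : ℝ} (hf : IntegrableOn f s μ)
    (hf0 : ∀ x ∈ s, 0 ≤ f x) (hg0 : ∀ x ∈ s, 0 ≤ g x) (hgK : ∀ x ∈ s, g x ≤ K) :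
    ∫ x in s, f x * g x ∂μ ≤ K * ∫ x in s, f x ∂μ := by
  rw [← integral_const_mul]
  refine integral_mono_of_nonneg ?_ (hf.const_mul K) ?_ <;>
    filter_upwards [ae_restrict_mem hs] with x hx
  · exact mul_nonneg (hf0 x hx) (hg0 x hx)
  · rw [mul_comm K]
    exact mul_le_mul_of_nonneg_left (hgK x hx) (hf0 x hx)

/-- `F T ≪_ε T ^ (a + ε)` for `T ≥ T₀`; the hypotheses and the conclusion of
`dedekind_moment_first_case` are literally of this form. -/
def GrowthExponentLE (F : ℝ → ℝ) (T₀ a : ℝ) : Prop :=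
  ∀ ε : ℝ, 0 < ε → ∃ C : ℝ, ∀ T : ℝ, T ≥ T₀ → F T ≤ C * T ^ (a + ε)

namespace GrowthExponentLE

variable {F G : ℝ → ℝ} {T₀ a b : ℝ}

theorem exists_nonneg_const (hF : GrowthExponentLE F T₀ a) (hT₀ : 0 < T₀) {ε : ℝ} (hε : 0 < ε) :
    ∃ C ≥ 0, ∀ T ≥ T₀, F T ≤ C * T ^ (a + ε) := by
  obtain ⟨C, hC⟩ := hF ε hε
  refine ⟨max C 0, le_max_right _ _, fun T hT => (hC T hT).trans ?_⟩
  gcongr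
  · exact (Real.rpow_pos_of_pos (hT₀.trans_le hT) _).le
  · exact le_max_left _ _

theorem of_le (hG : GrowthExponentLE G T₀ a) (hFG : ∀ T ≥ T₀, F T ≤ G T) :
    GrowthExponentLE F T₀ a := fun ε hε =>
  (hG ε hε).imp fun _ hC T hT => (hFG T hT).trans (hC T hT)

theorem mono (hF : GrowthExponentLE F T₀ a) (hT₀ : 1 ≤ T₀) (hab : a ≤ b) :
    GrowthExponentLE F T₀ b := fun ε hε => by
  obtain ⟨C, hC0, hC⟩ := hF.exists_nonneg_const (by linarith) hε
  refine ⟨C, fun T hT => (hC T hT).trans ?_⟩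
  gcongr
  linarith

theorem of_forall_pos (h : ∀ η > 0, GrowthExponentLE F T₀ (a + η)) : GrowthExponentLE F T₀ a :=
  fun ε hε => by
    obtain ⟨C, hC⟩ := h (ε / 2) (half_pos hε) (ε / 2) (half_pos hε)
    exact ⟨C, fun T hT => by simpa only [add_assoc, add_halves] using hC T hT⟩

theorem const_mul_rpow {C : ℝ} (hC : 0 ≤ C) (hT₀ : 1 ≤ T₀) (a : ℝ) :
    GrowthExponentLE (fun T => C * T ^ a) T₀ a := fun ε hε =>
  ⟨C, fun T hT => by dsimp only; gcongr <;> linarith⟩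

theorem mul (hF : GrowthExponentLE F T₀ a) (hG : GrowthExponentLE G T₀ b) (hT₀ : 0 < T₀)
    (hG0 : ∀ T ≥ T₀, 0 ≤ G T) : GrowthExponentLE (fun T => F T * G T) T₀ (a + b) := by
  intro ε hε
  obtain ⟨C₁, hC₁0, hC₁⟩ := hF.exists_nonneg_const hT₀ (half_pos hε)
  obtain ⟨C₂, -, hC₂⟩ := hG.exists_nonneg_const hT₀ (half_pos hε)
  refine ⟨C₁ * C₂, fun T hT => ?_⟩
  have hT_pos : 0 < T := hT₀.trans_le hT
  calc F T * G T ≤ (C₁ * T ^ (a + ε / 2)) * (C₂ * T ^ (b + ε / 2)) :=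
        mul_le_mul (hC₁ T hT) (hC₂ T hT) (hG0 T hT) (by positivity)
    _ = C₁ * C₂ * T ^ (a + b + ε) := by
        rw [mul_mul_mul_comm, ← Real.rpow_add hT_pos]; ring_nf

theorem rpow (hF : GrowthExponentLE F T₀ a) (hT₀ : 1 ≤ T₀) (hF0 : ∀ T ≥ T₀, 0 ≤ F T)
    {r : ℝ} (hr : 0 ≤ r) : GrowthExponentLE (fun T => F T ^ r) T₀ (r * a) := by
  intro ε hε
  obtain ⟨C, hC0, hC⟩ := hF.exists_nonneg_const (by linarith) (div_pos hε (by linarith : 0 < r + 1))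
  refine ⟨C ^ r, fun T hT => ?_⟩
  have hT1 : 1 ≤ T := hT₀.trans hT
  calc F T ^ r ≤ (C * T ^ (a + ε / (r + 1))) ^ r := Real.rpow_le_rpow (hF0 T hT) (hC T hT) hr
    _ = C ^ r * T ^ (r * a + r * (ε / (r + 1))) := by
        rw [Real.mul_rpow hC0 (by positivity), ← Real.rpow_mul (by positivity)]; ring_nf
    _ ≤ C ^ r * T ^ (r * a + ε) := by
        gcongr
        exact mul_div_add_one_le hr hε.le

theorem setIntegral_rpow_mul_rpow {f g : ℝ → ℝ} {t₀ T₀ p q θ m n : ℝ} (hfc : Continuous f)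
    (hgc : Continuous g) (hf0 : 0 ≤ f) (hg0 : 0 ≤ g) (hp : 0 ≤ p) (hq : 0 ≤ q) (hθ₀ : 0 ≤ θ)
    (hθ₁ : θ ≤ 1) (hT₀ : 1 ≤ T₀)
    (hf : GrowthExponentLE (fun T => ∫ t in Set.Ioc t₀ T, f t ^ p) T₀ m)
    (hg : GrowthExponentLE (fun T => ∫ t in Set.Ioc t₀ T, g t ^ q) T₀ n) :
    GrowthExponentLE (fun T => ∫ t in Set.Ioc t₀ T, f t ^ (θ * p) * g t ^ ((1 - θ) * q)) T₀
      (θ * m + (1 - θ) * n) := by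
  have hI_nonneg {h : ℝ → ℝ} (h0 : 0 ≤ h) (s : ℝ) (T : ℝ) : 0 ≤ ∫ t in Set.Ioc t₀ T, h t ^ s :=
    integral_nonneg fun t => Real.rpow_nonneg (h0 t) s
  refine ((hf.rpow hT₀ (fun T _ => hI_nonneg hf0 p T) hθ₀).mul
    (hg.rpow hT₀ (fun T _ => hI_nonneg hg0 q T) (sub_nonneg.2 hθ₁)) (by linarith)
    fun T _ => Real.rpow_nonneg (hI_nonneg hg0 q T) _).of_le fun T _ => ?_
  exact integral_rpow_mul_rpow_le hf0 hg0 hfc.aestronglyMeasurable hgc.aestronglyMeasurable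
    (hfc.rpow_const fun _ => .inr hp).integrableOn_Ioc
    (hgc.rpow_const fun _ => .inr hq).integrableOn_Ioc hθ₀ hθ₁

theorem setIntegral_mul_rpow {f g : ℝ → ℝ} {t₀ T₀ a c r : ℝ} (hg : GrowthExponentLE g t₀ a)
    (hf : GrowthExponentLE (fun T => ∫ t in Set.Ioc t₀ T, f t) T₀ c) (ht₀ : 0 < t₀)
    (hT₀ : 1 ≤ T₀) (ha : 0 ≤ a) (hr : 0 ≤ r) (hf0 : 0 ≤ f) (hg0 : 0 ≤ g)
    (hfi : ∀ T, IntegrableOn f (Set.Ioc t₀ T)) :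
    GrowthExponentLE (fun T => ∫ t in Set.Ioc t₀ T, f t * g t ^ r) T₀ (r * a + c) := by
  refine of_forall_pos fun η hη => ?_
  obtain ⟨C, hC0, hC⟩ := hg.exists_nonneg_const ht₀ (div_pos hη (by linarith : 0 < r + 1))
  set e := a + η / (r + 1)
  have hK := (const_mul_rpow hC0 hT₀ e).rpow hT₀
    (fun T hT => mul_nonneg hC0 (Real.rpow_nonneg (by linarith) e)) hr
  have hf_nonneg (T : ℝ) : 0 ≤ ∫ t in Set.Ioc t₀ T, f t :=
    setIntegral_nonneg measurableSet_Ioc fun t _ => hf0 t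
  refine ((hK.mul hf (by linarith) fun T _ => hf_nonneg T).mono hT₀ ?_).of_le fun T _ => ?_
  · have := mul_div_add_one_le hr hη.le
    simp only [e]
    linarith
  · refine setIntegral_mul_le_mul_setIntegral measurableSet_Ioc (hfi T) (fun t _ => hf0 t)
      (fun t _ => Real.rpow_nonneg (hg0 t) r) fun t ht => Real.rpow_le_rpow (hg0 t) ?_ hr
    refine (hC t ht.1.le).trans (mul_le_mul_of_nonneg_left ?_ hC0)
    exact Real.rpow_le_rpow (ht₀.trans ht.1).le ht.2 (by positivity)

end GrowthExponentLE

theorem Complex.add_ofReal_mul_I_ne_one {s : ℂ} (hs : s.re ≠ 1) (t : ℝ) : s + t * I ≠ 1 :=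
  fun h => hs (by simpa using congrArg re h)

theorem continuous_riemannZeta_vertical {s : ℂ} (hs : s.re ≠ 1) :
    Continuous fun t : ℝ => riemannZeta (s + t * I) :=
  continuous_iff_continuousAt.2 fun t =>
    (differentiableAt_riemannZeta (add_ofReal_mul_I_ne_one hs t)).continuousAt.comp
      (f := fun t : ℝ => s + t * I) (by fun_prop)

theorem DirichletCharacter.continuous_LFunction_vertical {N : ℕ} [NeZero N]
    (χ : DirichletCharacter ℂ N) {s : ℂ} (hs : s.re ≠ 1) :
    Continuous fun t : ℝ => χ.LFunction (s + t * I) :=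
  continuous_iff_continuousAt.2 fun t =>
    (χ.differentiableAt_LFunction _ (.inl (add_ofReal_mul_I_ne_one hs t))).continuousAt.comp
      (f := fun t : ℝ => s + t * I) (by fun_prop)

/-- First case of the moment estimate for the Dedekind zeta function
`Z = ζ·β` of `ℤ[i]`: given the subconvexity bound `β(1/2+it) ≪ t^(13/84+ε)`, a moment
bound `∫₁ᵀ |ζ(1/2+it)|^D dt ≪ T^(M+ε)` and the fourth-moment bound for `β`, for every
`4 ≤ A ≤ D` one gets `∫₁ᵀ |Z(1/2+it)|^A dt ≪ T^((13/84 + (M-8/21)/D)·A + 8/21 + ε)`. -/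
theorem dedekind_moment_first_case (D M : ℝ) (hD : 4 ≤ D)
    (hβpt : ∀ ε : ℝ, 0 < ε → ∃ C : ℝ, ∀ t : ℝ, t ≥ 1 →
      ‖dirichletBeta (1/2 + t * I)‖ ≤ C * t ^ (13 / 84 + ε))
    (hζ : ∀ ε : ℝ, 0 < ε → ∃ C : ℝ, ∀ T : ℝ, T ≥ 2 →
      ∫ t in Set.Ioc (1 : ℝ) T, ‖riemannZeta (1/2 + t * I)‖ ^ D ≤ C * T ^ (M + ε))
    (hβ : ∀ ε : ℝ, 0 < ε → ∃ C : ℝ, ∀ T : ℝ, T ≥ 2 →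
      ∫ t in Set.Ioc (1 : ℝ) T, ‖dirichletBeta (1/2 + t * I)‖ ^ (4 : ℝ) ≤ C * T ^ (1 + ε)) :
    ∀ A : ℝ, 4 ≤ A → A ≤ D → ∀ ε : ℝ, 0 < ε → ∃ C' : ℝ, ∀ T : ℝ, T ≥ 2 →
      ∫ t in Set.Ioc (1 : ℝ) T,
          ‖riemannZeta (1/2 + t * I) * dirichletBeta (1/2 + t * I)‖ ^ A ≤
        C' * T ^ ((13 / 84 + (M - 8 / 21) / D) * A + 8 / 21 + ε) := by
  intro A hA4 hAD
  have hD0 : 0 < D := by linarith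
  set θ := A / D
  have hθD : θ * D = A := div_mul_cancel₀ A hD0.ne'
  have hθ1 : θ ≤ 1 := div_le_one_of_le₀ hAD hD0.le
  have hAb : 0 < A - (1 - θ) * 4 := by nlinarith [div_pos (by linarith : 0 < A) hD0]
  have hζc : Continuous fun t : ℝ => ‖riemannZeta (1/2 + t * I)‖ :=
    (continuous_riemannZeta_vertical (by norm_num)).norm
  have hβc : Continuous fun t : ℝ => ‖dirichletBeta (1/2 + t * I)‖ :=
    (DirichletCharacter.continuous_LFunction_vertical _ (by norm_num)).norm
  have hmixed := GrowthExponentLE.setIntegral_rpow_mul_rpow hζc hβc (fun _ => norm_nonneg _)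
    (fun _ => norm_nonneg _) hD0.le (by norm_num) (by positivity) hθ1 one_le_two hζ hβ
  have hmoment := GrowthExponentLE.setIntegral_mul_rpow hβpt hmixed one_pos one_le_two
    (by norm_num) hAb.le (fun t => by positivity) (fun _ => norm_nonneg _)
    fun T => ((hζc.rpow_const fun _ => .inr (by positivity)).mul
      (hβc.rpow_const fun _ => .inr (by linarith))).integrableOn_Ioc
  rw [show (A - (1 - θ) * 4) * (13 / 84) + (θ * M + (1 - θ) * 1) =
      (13 / 84 + (M - 8 / 21) / D) * A + 8 / 21 by simp only [θ]; field_simp; ring] at hmoment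
  refine hmoment.of_le fun T _ => le_of_eq (integral_congr_ae (.of_forall fun t => ?_))
  dsimp only
  rw [hθD, norm_mul, Real.mul_rpow (norm_nonneg _) (norm_nonneg _), mul_assoc,
    ← Real.rpow_add' (norm_nonneg _) (by linarith), add_sub_cancel]
end

section
/- Let k, l be reals with k > 0, l ≥ 0, -2k + 4l + 2 > 0 and 1 - k - 16l/13 ≥ 0, and let A > (4k+4l+2)/k be real. Assume: (i) for every ε > 0 there is a constant with |ζ(1/2+it)| ≤ C t^{13/84+ε} for all t ≥ 1; (ii) for every ε > 0 there is a constant C₀(ε) such that for all T ≥ 2, all V ≥ 1, and every finite family of points t₁ < t₂ < ⋯ < t_R in [1, T] satisfying t_{r+1} - t_r ≥ 1 and |ζ(1/2 + i t_r)| ≥ V for all r, one has R ≤ C₀(ε)·(T^{1+ε} V^{-6} + T^{1+l/k+ε} V^{-2(1+2k+2l)/k}). Then for every ε > 0 there is a constant C₁(ε) such that for all T ≥ 2 and every finite family of points t₁ < ⋯ < t_R in [1, T] with t_{r+1} - t_r ≥ 1, one has ∑_{r=1}^{R} |ζ(1/2 + i t_r)|^A ≤ C₁(ε) · T^{1 +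 13(A-6)/84 + ε}. -/
/-!
Layer cake: `∑ |ζ(1/2+it_r)|^A ≤ R + A ∫₁^M N(V) V^(A-1) dV`, where `N(V)` counts the points with
`|ζ| ≥ V` and `M ≍ T^(13/84+ε)` is Bourgain's pointwise bound, so no point exceeds level `M`.
Inserting the large-values estimate for `N(V)` and integrating, the term `T V^(-6)` contributes
`T · M^(A-6)`, which is the claimed size, and the term `T^(1+l/k) V^(-B)` with `B = (4k+4l+2)/k < A`
contributes `T^(1+l/k) M^(A-B)`, which is no larger because `l/k ≤ 13(B-6)/84` is exactly
`13 - 13k - 16l ≥ 0`.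
-/

open Complex MeasureTheory Finset

def WellSpaced {ι : Type*} [Preorder ι] (t : ι → ℝ) : Prop :=
  ∀ r s : ι, r < s → t r + 1 ≤ t s

namespace WellSpaced

theorem comp_strictMono {ι κ : Type*} [Preorder ι] [Preorder κ] {t : ι → ℝ} (ht : WellSpaced t)
    {f : κ → ι} (hf : StrictMono f) : WellSpaced (t ∘ f) :=
  fun _ _ hrs => ht _ _ (hf hrs)

theorem card_le {R : ℕ} {t : Fin R → ℝ} (ht : WellSpaced t) {a b : ℝ} (hab : a ≤ b)
    (hmem : ∀ r, t r ∈ Set.Icc a b) : (R : ℝ) ≤ b - a + 1 := by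
  cases R with
  | zero => simp only [CharP.cast_eq_zero]; linarith
  | succ n =>
    have hlower : ∀ r : Fin (n + 1), a + r ≤ t r := by
      intro r
      induction r using Fin.induction with
      | zero => simpa using (hmem 0).1
      | succ r ih =>
        have := ht _ _ (Fin.castSucc_lt_succ (i := r))
        simp only [Fin.val_castSucc, Fin.val_succ, Nat.cast_add, Nat.cast_one] at ih ⊢
        linarith
    have := (hlower (Fin.last n)).trans (hmem (Fin.last n)).2
    push_cast at this ⊢
    linarith

theorem card_filter_le {s : Set ℝ} {F : ℝ → ℝ} {V D : ℝ}
    (hD : ∀ (n : ℕ) (u : Fin n → ℝ), (∀ r, u r ∈ s) → WellSpaced u → (∀ r, V ≤ F (u r)) →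
      (n : ℝ) ≤ D)
    {R : ℕ} {t : Fin R → ℝ} (hmem : ∀ r, t r ∈ s) (ht : WellSpaced t) :
    (#{r | V ≤ F (t r)} : ℝ) ≤ D := by
  set S := ({r | V ≤ F (t r)} : Finset (Fin R))
  refine hD S.card (t ∘ S.orderEmbOfFin rfl) (fun r => hmem _)
    (ht.comp_strictMono (S.orderEmbOfFin rfl).strictMono) fun r => ?_
  exact (mem_filter.1 (S.orderEmbOfFin_mem rfl r)).2

end WellSpaced

section LayerCake

variable {A M : ℝ}

theorem integrableOn_Ioc_one_rpow (c : ℝ) :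
    IntegrableOn (fun V : ℝ => V ^ c) (Set.Ioc 1 M) :=
  (ContinuousOn.integrableOn_Icc fun V hV =>
    (Real.continuousAt_rpow_const V c (Or.inl (by linarith [hV.1]))).continuousWithinAt).mono_set
    Set.Ioc_subset_Icc_self

theorem setIntegral_Ioc_one_rpow {x c : ℝ} (hx : 1 ≤ x) (hc : 0 < c + 1) :
    ∫ V in Set.Ioc 1 x, V ^ c = (x ^ (c + 1) - 1) / (c + 1) := by
  rw [← intervalIntegral.integral_of_le hx, integral_rpow (Or.inl (by linarith)), Real.one_rpow]

theorem setIntegral_Ioc_one_rpow_le {c : ℝ} (hM : 1 ≤ M) (hc : 0 < c + 1) :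
    ∫ V in Set.Ioc 1 M, V ^ c ≤ M ^ (c + 1) / (c + 1) := by
  rw [setIntegral_Ioc_one_rpow hM hc]
  gcongr
  linarith

theorem rpow_le_one_add_mul_setIntegral_indicator (hA : 0 < A) {x : ℝ} (hx : 0 ≤ x)
    (hxM : x ≤ M) :
    x ^ A ≤ 1 + A * ∫ V in Set.Ioc 1 M, (Set.Iic x).indicator (fun V => V ^ (A - 1)) V := by
  rw [setIntegral_indicator measurableSet_Iic, Set.Ioc_inter_Iic, min_eq_right hxM]
  rcases le_or_gt x 1 with hx1 | hx1
  · rw [Set.Ioc_eq_empty hx1.not_gt, Measure.restrict_empty, integral_zero_measure, mul_zero,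
      add_zero]
    exact Real.rpow_le_one hx hx1 hA.le
  · rw [setIntegral_Ioc_one_rpow hx1.le (by linarith), sub_add_cancel]
    field_simp
    linarith

theorem sum_rpow_le_card_add_mul_setIntegral {ι : Type*} [Fintype ι] {x : ι → ℝ} (hA : 0 < A)
    (hx : ∀ i, 0 ≤ x i) (hxM : ∀ i, x i ≤ M) :
    ∑ i, x i ^ A ≤ Fintype.card ι + A * ∫ V in Set.Ioc 1 M, #{i | V ≤ x i} * V ^ (A - 1) := by
  have hsum : ∀ V, ∑ i, (Set.Iic (x i)).indicator (fun V => V ^ (A - 1)) V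
      = #{i | V ≤ x i} * V ^ (A - 1) := by
    intro V
    simp only [Set.indicator_apply, Set.mem_Iic]
    rw [← sum_filter, sum_const, nsmul_eq_mul]
  calc ∑ i, x i ^ A
      ≤ ∑ i, (1 + A * ∫ V in Set.Ioc 1 M, (Set.Iic (x i)).indicator (fun V => V ^ (A - 1)) V) :=
        sum_le_sum fun i _ => rpow_le_one_add_mul_setIntegral_indicator hA (hx i) (hxM i)
    _ = Fintype.card ι + A * ∫ V in Set.Ioc 1 M, #{i | V ≤ x i} * V ^ (A - 1) := by
        rw [sum_add_distrib, ← mul_sum, ← integral_finsetSum _ fun i _ =>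
          (integrableOn_Ioc_one_rpow _).indicator measurableSet_Iic]
        simp [hsum]

theorem sum_rpow_le_of_card_le {ι : Type*} [Fintype ι] {x : ι → ℝ} {a b p q : ℝ} (hA : 0 < A)
    (hM : 1 ≤ M) (hx : ∀ i, 0 ≤ x i) (hxM : ∀ i, x i ≤ M) (ha : 0 ≤ a) (hb : 0 ≤ b)
    (hp : p < A) (hq : q < A)
    (hcount : ∀ V, 1 < V → (#{i | V ≤ x i} : ℝ) ≤ a * V ^ (-p) + b * V ^ (-q)) :
    ∑ i, x i ^ A ≤
      Fintype.card ι + A * (a * (M ^ (A - p) / (A - p)) + b * (M ^ (A - q) / (A - q))) := by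
  have hpow : ∀ {V : ℝ} (c : ℝ), 0 < V → V ^ (-c) * V ^ (A - 1) = V ^ (A - 1 - c) := by
    intro V c hV
    rw [← Real.rpow_add hV]
    ring_nf
  have hint : ∫ V in Set.Ioc 1 M, (#{i | V ≤ x i} : ℝ) * V ^ (A - 1)
      ≤ ∫ V in Set.Ioc 1 M, (a * V ^ (A - 1 - p) + b * V ^ (A - 1 - q)) := by
    refine integral_mono_of_nonneg
      ((ae_restrict_iff' measurableSet_Ioc).2 (ae_of_all _ fun V hV => ?_))
      (((integrableOn_Ioc_one_rpow _).const_mul _).add ((integrableOn_Ioc_one_rpow _).const_mul _))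
      ((ae_restrict_iff' measurableSet_Ioc).2 (ae_of_all _ fun V hV => ?_))
    · have hV0 : 0 < V := by linarith [hV.1]
      positivity
    have hV0 : 0 < V := by linarith [hV.1]
    calc (#{i | V ≤ x i} : ℝ) * V ^ (A - 1)
        ≤ (a * V ^ (-p) + b * V ^ (-q)) * V ^ (A - 1) := by
          gcongr
          exact hcount V hV.1
      _ = a * V ^ (A - 1 - p) + b * V ^ (A - 1 - q) := by
          rw [add_mul, mul_assoc, mul_assoc, hpow p hV0, hpow q hV0]
  have hbound : ∀ c, c < A → ∫ V in Set.Ioc 1 M, V ^ (A - 1 - c) ≤ M ^ (A - c) / (A - c) := by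
    intro c hc
    have h := setIntegral_Ioc_one_rpow_le hM (c := A - 1 - c) (by linarith)
    rwa [show A - 1 - c + 1 = A - c by ring] at h
  refine (sum_rpow_le_card_add_mul_setIntegral hA hx hxM).trans ?_
  gcongr
  refine hint.trans ?_
  rw [integral_add ((integrableOn_Ioc_one_rpow _).const_mul _)
    ((integrableOn_Ioc_one_rpow _).const_mul _), integral_const_mul, integral_const_mul]
  gcongr
  exacts [hbound p hp, hbound q hq]

end LayerCake

theorem rpow_mul_mul_rpow_le {T C e α c E : ℝ} (hT : 1 ≤ T) (hC : 0 ≤ C) (h : α + e * c ≤ E) :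
    T ^ α * (C * T ^ e) ^ c ≤ C ^ c * T ^ E := by
  have hT0 : 0 < T := by linarith
  rw [Real.mul_rpow hC (by positivity), ← Real.rpow_mul hT0.le, mul_left_comm,
    ← Real.rpow_add hT0]
  gcongr

theorem sum_rpow_le_of_largeValues {ι : Type*} [Fintype ι] {x : ι → ℝ}
    {A T C e a α β p q E : ℝ} (hA : 0 < A) (hT : 1 ≤ T) (hC : 1 ≤ C) (he : 0 ≤ e)
    (hx : ∀ i, 0 ≤ x i) (hxT : ∀ i, x i ≤ C * T ^ e) (ha : 0 ≤ a) (hp : p < A) (hq : q < A)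
    (hcount : ∀ V, 1 < V → (#{i | V ≤ x i} : ℝ) ≤ a * (T ^ α * V ^ (-p) + T ^ β * V ^ (-q)))
    (hcard : (Fintype.card ι : ℝ) ≤ T ^ E) (hαE : α + e * (A - p) ≤ E)
    (hβE : β + e * (A - q) ≤ E) :
    ∑ i, x i ^ A ≤ (1 + A * a * C ^ (A - p) / (A - p) + A * a * C ^ (A - q) / (A - q)) * T ^ E := by
  have hM : 1 ≤ C * T ^ e := one_le_mul_of_one_le_of_one_le hC (Real.one_le_rpow hT he)
  calc ∑ i, x i ^ A
      ≤ Fintype.card ι + A * (a * T ^ α * ((C * T ^ e) ^ (A - p) / (A - p))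
          + a * T ^ β * ((C * T ^ e) ^ (A - q) / (A - q))) := by
        refine sum_rpow_le_of_card_le hA hM hx hxT (by positivity) (by positivity) hp hq
          fun V hV => ?_
        linarith [hcount V hV]
    _ = Fintype.card ι + A * a / (A - p) * (T ^ α * (C * T ^ e) ^ (A - p))
          + A * a / (A - q) * (T ^ β * (C * T ^ e) ^ (A - q)) := by ring
    _ ≤ T ^ E + A * a / (A - p) * (C ^ (A - p) * T ^ E)
          + A * a / (A - q) * (C ^ (A - q) * T ^ E) := by
        gcongr ?_ + _ * ?_ + _ * ?_
        exacts [rpow_mul_mul_rpow_le hT (zero_le_one.trans hC) hαE,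
          rpow_mul_mul_rpow_le hT (zero_le_one.trans hC) hβE]
    _ = _ := by ring

section ExponentPair

variable {k l : ℝ}

theorem six_lt_largeValues_exponent (hk : 0 < k) (hden : 0 < -2 * k + 4 * l + 2) :
    6 < (4 * k + 4 * l + 2) / k := by
  rw [lt_div_iff₀ hk]
  linarith

theorem largeValues_secondTerm_exponent_le (hk : 0 < k) (hden : 0 < -2 * k + 4 * l + 2)
    (hkl : 1 - k - 16 * l / 13 ≥ 0) {A ε : ℝ} (hε : 0 ≤ ε) :
    1 + l / k + ε + (13 / 84 + ε) * (A - (4 * k + 4 * l + 2) / k)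
      ≤ 1 + 13 * (A - 6) / 84 + ε * (A - 5) := by
  set B := (4 * k + 4 * l + 2) / k
  have hBk : B * k = 4 * k + 4 * l + 2 := div_mul_cancel₀ _ hk.ne'
  have hlk : l / k ≤ 13 * (B - 6) / 84 := by
    rw [div_le_iff₀ hk]
    linarith
  have hB6 : 0 ≤ B - 6 := sub_nonneg.2 (six_lt_largeValues_exponent hk hden).le
  linarith [mul_nonneg hε hB6]

end ExponentPair

theorem discrete_zeta_moment_third_case_general (k l : ℝ) (hk : 0 < k)
    (hden : 0 < -2 * k + 4 * l + 2) (hkl : 1 - k - 16 * l / 13 ≥ 0)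
    (A : ℝ) (hA : (4 * k + 4 * l + 2) / k < A)
    (hζpt : ∀ ε : ℝ, 0 < ε → ∃ C : ℝ, ∀ t : ℝ, t ≥ 1 →
      ‖riemannZeta (1/2 + t * I)‖ ≤ C * t ^ (13 / 84 + ε))
    (hLV : ∀ ε : ℝ, 0 < ε → ∃ C₀ : ℝ, ∀ T : ℝ, T ≥ 2 → ∀ V : ℝ, V ≥ 1 →
      ∀ R : ℕ, ∀ t : Fin R → ℝ,
        (∀ r, t r ∈ Set.Icc (1 : ℝ) T) →
        (∀ r s : Fin R, r < s → t r + 1 ≤ t s) →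
        (∀ r, V ≤ ‖riemannZeta (1/2 + t r * I)‖) →
        (R : ℝ) ≤ C₀ * (T ^ (1 + ε) * V ^ (-6 : ℝ) +
          T ^ (1 + l / k + ε) * V ^ (-(2 * (1 + 2 * k + 2 * l) / k)))) :
    ∀ ε : ℝ, 0 < ε → ∃ C₁ : ℝ, ∀ T : ℝ, T ≥ 2 → ∀ R : ℕ, ∀ t : Fin R → ℝ,
      (∀ r, t r ∈ Set.Icc (1 : ℝ) T) →
      (∀ r s : Fin R, r < s → t r + 1 ≤ t s) →
      ∑ r, ‖riemannZeta (1/2 + t r * I)‖ ^ A ≤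
        C₁ * T ^ (1 + 13 * (A - 6) / 84 + ε) := by
  intro ε hε
  set B := (4 * k + 4 * l + 2) / k with hB
  have hA6 : 6 < A := (six_lt_largeValues_exponent hk hden).trans hA
  -- the `ε₀`-losses of the two hypotheses add up to `ε₀ (A - 5)` in the exponent
  set ε₀ := ε / (A - 5)
  have hε₀ : 0 < ε₀ := div_pos hε (by linarith)
  have hεε₀ : ε = ε₀ * (A - 5) := (div_mul_cancel₀ ε (by linarith)).symm
  obtain ⟨C, hC⟩ := hζpt ε₀ hε₀
  obtain ⟨C₀, hC₀⟩ := hLV ε₀ hε₀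
  refine ⟨1 + A * max C₀ 0 * max C 1 ^ (A - 6) / (A - 6)
    + A * max C₀ 0 * max C 1 ^ (A - B) / (A - B), fun T hT R t hmem ht => ?_⟩
  have hT1 : 1 ≤ T := by linarith
  refine sum_rpow_le_of_largeValues (x := fun r => ‖riemannZeta (1/2 + t r * I)‖)
    (e := 13 / 84 + ε₀) (α := 1 + ε₀) (β := 1 + l / k + ε₀)
    (by linarith) hT1 (le_max_right C 1) (by positivity) (fun r => norm_nonneg _)
    (fun r => ?_) (le_max_right C₀ 0) hA6 hA (fun V hV => ?_) ?_ (by rw [hεε₀]; linarith)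
    (hεε₀ ▸ largeValues_secondTerm_exponent_le hk hden hkl hε₀.le)
  · have ht0 : 0 ≤ t r := by linarith [(hmem r).1]
    refine (hC _ (hmem r).1).trans ?_
    gcongr
    exacts [le_max_left C 1, (hmem r).2]
  · have hexp : -(2 * (1 + 2 * k + 2 * l) / k) = -B := by rw [hB]; ring
    refine (WellSpaced.card_filter_le (F := fun s => ‖riemannZeta (1/2 + s * I)‖)
      (hC₀ T hT V hV.le) hmem ht).trans ?_
    rw [hexp]
    gcongr
    exact le_max_left C₀ 0
  · simpa using ((WellSpaced.card_le ht hT1 hmem).trans_eq (sub_add_cancel T 1)).trans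
      (Real.self_le_rpow_of_one_le hT1 (by linarith : 1 ≤ 1 + 13 * (A - 6) / 84 + ε))

/-- The discrete third-case moment bound for `ζ`: assuming Bourgain's
subconvexity bound `ζ(1/2+it) ≪ t^(13/84+ε)` and Ivić's large-values estimate for an
exponent pair `(k,l)` with `1 - k - 16l/13 ≥ 0`, for any `A > (4k+4l+2)/k` and any
well-spaced points `t₁ < ⋯ < t_R` in `[1,T]` one has
`∑_r |ζ(1/2+it_r)|^A ≪ T^(1+13(A-6)/84+ε)`. -/
theorem discrete_zeta_moment_third_case (k l : ℝ) (hk : 0 < k) (hl : 0 ≤ l)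
    (hden : 0 < -2 * k + 4 * l + 2) (hkl : 1 - k - 16 * l / 13 ≥ 0)
    (A : ℝ) (hA : (4 * k + 4 * l + 2) / k < A)
    (hζpt : ∀ ε : ℝ, 0 < ε → ∃ C : ℝ, ∀ t : ℝ, t ≥ 1 →
      ‖riemannZeta (1/2 + t * I)‖ ≤ C * t ^ (13 / 84 + ε))
    (hLV : ∀ ε : ℝ, 0 < ε → ∃ C₀ : ℝ, ∀ T : ℝ, T ≥ 2 → ∀ V : ℝ, V ≥ 1 →
      ∀ R : ℕ, ∀ t : Fin R → ℝ,
        (∀ r, t r ∈ Set.Icc (1 : ℝ) T) →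
        (∀ r s : Fin R, r < s → t r + 1 ≤ t s) →
        (∀ r, V ≤ ‖riemannZeta (1/2 + t r * I)‖) →
        (R : ℝ) ≤ C₀ * (T ^ (1 + ε) * V ^ (-6 : ℝ) +
          T ^ (1 + l / k + ε) * V ^ (-(2 * (1 + 2 * k + 2 * l) / k)))) :
    ∀ ε : ℝ, 0 < ε → ∃ C₁ : ℝ, ∀ T : ℝ, T ≥ 2 → ∀ R : ℕ, ∀ t : Fin R → ℝ,
      (∀ r, t r ∈ Set.Icc (1 : ℝ) T) →
      (∀ r s : Fin R, r < s → t r + 1 ≤ t s) →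
      ∑ r, ‖riemannZeta (1/2 + t r * I)‖ ^ A ≤
        C₁ * T ^ (1 + 13 * (A - 6) / 84 + ε) :=
  discrete_zeta_moment_third_case_general k l hk hden hkl A hA hζpt hLV
end
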